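/- Let N = (S, C, R) be a chemical reaction network with deficiency δ and t terminal strong linkage classes. Then for each positive rate vector k ∈ ℝ^R_{>0}, dim Ker(Y ∘ A_k) ≤ δ + t, where Y is the map of complexes and A_k is the Laplacian map. -/

import Mathlib

open scoped BigOperators Classical

/-- A chemical reaction network (CRN) on a finite species set `S`:
complexes are non-negative vectors in `ℝ^S`, reactions are pairs of complexes,
no reaction is a self-loop, and every complex occurs in some reaction. -/
structure CRN (S : Type*) [Fintype S] where
  complexes : Finset (S → ℝ)
  reactions : Finset ((S → ℝ) × (S → ℝ))
  complexes_nonneg : ∀ y ∈ complexes, ∀ i, 0 ≤ y i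
  mem_source : ∀ r ∈ reactions, r.1 ∈ complexes
  mem_target : ∀ r ∈ reactions, r.2 ∈ complexes
  ne_of_mem : ∀ r ∈ reactions, r.1 ≠ r.2
  cover : ∀ y ∈ complexes, ∃ y', (y, y') ∈ reactions ∨ (y', y) ∈ reactions

namespace CRN

variable {S : Type*} [Fintype S] (N : CRN S)

/-- One-step reaction relation on complexes. -/
def step (y y' : S → ℝ) : Prop := (y, y') ∈ N.reactions

/-- Reachability along directed reactions. -/
def reach : (S → ℝ) → (S → ℝ) → Prop := Relation.ReflTransGen N.step

/-- A complex is terminal iff it belongs to a terminal strong linkage class,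
i.e. everything reachable from it can reach it back. -/
def IsTerminal (y : S → ℝ) : Prop :=
  y ∈ N.complexes ∧ ∀ y', N.reach y y' → N.reach y' y

/-- A nonterminal complex. -/
def Nonterminal (y : S → ℝ) : Prop := y ∈ N.complexes ∧ ¬ N.IsTerminal y

/-- The set of terminal strong linkage classes. -/
def tslc : Set (Set (S → ℝ)) :=
  {L | ∃ y, N.IsTerminal y ∧ L = {y' | N.reach y y' ∧ N.reach y' y}}

/-- The number `t` of terminal strong linkage classes. -/
noncomputable def numTSLC : ℕ := Nat.card N.tslc

/-- Undirected connectivity (for linkage classes). -/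
def linked : (S → ℝ) → (S → ℝ) → Prop :=
  Relation.ReflTransGen (fun a b => (a, b) ∈ N.reactions ∨ (b, a) ∈ N.reactions)

/-- The set of linkage classes (connected components of the reaction digraph). -/
def linkageClasses : Set (Set (S → ℝ)) :=
  {L | ∃ y ∈ N.complexes, L = {y' | y' ∈ N.complexes ∧ N.linked y y'}}

/-- The number `ℓ` of linkage classes. -/
noncomputable def numLinkageClasses : ℕ := Nat.card N.linkageClasses

/-- The stoichiometric subspace `S = span{y' - y : y → y'}`. -/
def stoichSubspace : Submodule ℝ (S → ℝ) :=
  Submodule.span ℝ {v | ∃ r ∈ N.reactions, v = r.2 - r.1}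

/-- The rank `s` of the network. -/
noncomputable def rank : ℕ := Module.finrank ℝ N.stoichSubspace

/-- The deficiency `δ = n - ℓ - s`. -/
noncomputable def deficiency : ℤ :=
  (N.complexes.card : ℤ) - N.numLinkageClasses - N.rank

/-- The map of complexes `Y : ℝ^C → ℝ^S`, sending `ω_y ↦ y`. -/
noncomputable def mapY : (↥N.complexes → ℝ) →ₗ[ℝ] (S → ℝ) :=
  ∑ y : ↥N.complexes, (LinearMap.proj y).smulRight (y : S → ℝ)

/-- The incidence map `I_a : ℝ^R → ℝ^C`, sending `ω_{y→y'} ↦ ω_{y'} - ω_y`. -/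
noncomputable def incidence : (↥N.reactions → ℝ) →ₗ[ℝ] (↥N.complexes → ℝ) :=
  ∑ r : ↥N.reactions,
    (LinearMap.proj r).smulRight
      (Pi.single (⟨r.1.2, N.mem_target r.1 r.2⟩ : ↥N.complexes) 1
        - Pi.single (⟨r.1.1, N.mem_source r.1 r.2⟩ : ↥N.complexes) 1)

/-- The Laplacian map `A_k x = Σ_{y→y'} k_{y→y'} x_y (ω_{y'} - ω_y)`. -/
noncomputable def laplacian (k : ↥N.reactions → ℝ) :
    (↥N.complexes → ℝ) →ₗ[ℝ] (↥N.complexes → ℝ) :=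
  ∑ r : ↥N.reactions, k r •
    ((LinearMap.proj (⟨r.1.1, N.mem_source r.1 r.2⟩ : ↥N.complexes)).smulRight
      (Pi.single (⟨r.1.2, N.mem_target r.1 r.2⟩ : ↥N.complexes) 1
        - Pi.single (⟨r.1.1, N.mem_source r.1 r.2⟩ : ↥N.complexes) 1))

/-- A positive equilibrium of the PL-RDK system with rate constants `k` and
kinetic-order assignment (T-matrix) `T`. -/
def IsPosEquilibrium (k : ↥N.reactions → ℝ) (T : (S → ℝ) → (S → ℝ)) (c : S → ℝ) : Prop :=
  (∀ i, 0 < c i) ∧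
    ∑ r : ↥N.reactions, (k r * ∏ i, (c i) ^ (T r.1.1 i)) • ((r.1.2 : S → ℝ) - r.1.1) = 0

/-- The set of reactant complexes. -/
def reactantSet : Set (S → ℝ) := {y | ∃ y', (y, y') ∈ N.reactions}

/-- The reactant subspace `R = Im Y_res`. -/
def reactantSubspace : Submodule ℝ (S → ℝ) := Submodule.span ℝ N.reactantSet

/-- The reactant deficiency `δ_ρ = n_r - q`. -/
noncomputable def reactantDeficiency : ℤ :=
  (Nat.card N.reactantSet : ℤ) - Module.finrank ℝ N.reactantSubspace

end CRN

/-!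
Factor `A_k = I ∘ D_k` through the incidence map `I`, where `(D_k x)_{y→y'} = k_{y→y'} x_y`.
Then `dim Ker (Y A_k) = dim Ker A_k + dim (Ker Y ∩ Im A_k) ≤ dim Ker A_k + dim (Ker Y ∩ Im I)`.
Since `Y` maps `Im I` onto the stoichiometric subspace, the second term is `dim Im I - s`, and
`dim Im I ≤ n - ℓ` because summing over each linkage class annihilates `Im I`. Finally
`dim Ker A_k = dim Ker A_kᵀ`, and an element of `Ker A_kᵀ` is a harmonic function for the walk
along reactions: by the maximum principle it is constant on each terminal strong linkage class
and vanishes once these constants do, so `dim Ker A_k ≤ t`.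
-/

open Module LinearMap

section LinearAlgebra

variable {K V W U : Type*} [Field K] [AddCommGroup V] [Module K V] [AddCommGroup W] [Module K W]
  [AddCommGroup U] [Module K U] [FiniteDimensional K V]

theorem LinearMap.finrank_ker_inf_add_finrank_map (f : V →ₗ[K] W) (p : Submodule K V) :
    finrank K ↥(ker f ⊓ p) + finrank K ↥(p.map f) = finrank K p := by
  have h := finrank_range_add_finrank_ker (f.domRestrict p)
  rw [range_domRestrict, ker_domRestrict, ← Submodule.finrank_map_subtype_eq,
    Submodule.map_comap_subtype, inf_comm] at h
  omega

theorem LinearMap.finrank_ker_comp (f : W →ₗ[K] U) (g : V →ₗ[K] W) :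
    finrank K ↥(ker (f ∘ₗ g)) = finrank K ↥(ker g) + finrank K ↥(ker f ⊓ range g) := by
  have h := g.finrank_ker_inf_add_finrank_map (ker (f ∘ₗ g))
  rwa [inf_eq_left.2 (ker_le_ker_comp g f), ker_comp, Submodule.map_comap_eq, inf_comm,
    eq_comm] at h

end LinearAlgebra

open Matrix in
theorem Matrix.finrank_ker_mulVecLin_transpose {K n : Type*} [Field K] [Fintype n]
    (M : Matrix n n K) : finrank K ↥(ker Mᵀ.mulVecLin) = finrank K ↥(ker M.mulVecLin) := by
  have h := finrank_range_add_finrank_ker M.mulVecLin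
  have hT := finrank_range_add_finrank_ker Mᵀ.mulVecLin
  rw [← Matrix.rank] at h hT
  rw [Matrix.rank_transpose] at hT
  omega

namespace CRN

variable {S : Type*} [Fintype S] (N : CRN S)

def source (r : N.reactions) : N.complexes := ⟨r.1.1, N.mem_source r.1 r.2⟩

def target (r : N.reactions) : N.complexes := ⟨r.1.2, N.mem_target r.1 r.2⟩

theorem mapY_single (y : N.complexes) : N.mapY (Pi.single y 1) = y := by
  simp [mapY, Pi.single_apply]

theorem incidence_apply (v : N.reactions → ℝ) :
    N.incidence v = ∑ r, v r • (Pi.single (N.target r) 1 - Pi.single (N.source r) 1) := by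
  simp [incidence, source, target]

theorem incidence_single (r : N.reactions) :
    N.incidence (Pi.single r 1) = Pi.single (N.target r) 1 - Pi.single (N.source r) 1 := by
  simp [incidence_apply, Pi.single_apply]

theorem laplacian_apply (k : N.reactions → ℝ) (x : N.complexes → ℝ) :
    N.laplacian k x = N.incidence fun r => k r * x (N.source r) := by
  simp [laplacian, incidence_apply, source, target, smul_smul]

theorem range_laplacian_le (k : N.reactions → ℝ) :
    range (N.laplacian k) ≤ range N.incidence := by
  rintro _ ⟨x, rfl⟩
  exact ⟨_, (N.laplacian_apply k x).symm⟩

theorem map_mapY_range_incidence : (range N.incidence).map N.mapY = N.stoichSubspace := by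
  rw [← range_comp]
  apply le_antisymm
  · rintro _ ⟨v, rfl⟩
    rw [LinearMap.comp_apply, incidence_apply, map_sum]
    refine Submodule.sum_mem _ fun r _ => ?_
    rw [map_smul, map_sub, mapY_single, mapY_single]
    exact Submodule.smul_mem _ _ (Submodule.subset_span ⟨r.1, r.2, rfl⟩)
  · rw [stoichSubspace, Submodule.span_le]
    rintro _ ⟨r, hr, rfl⟩
    refine ⟨Pi.single ⟨r, hr⟩ 1, ?_⟩
    rw [LinearMap.comp_apply, incidence_single, map_sub, mapY_single, mapY_single]
    rfl

theorem linked_symm {y z : S → ℝ} (h : N.linked y z) : N.linked z y :=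
  symm (r := Relation.ReflTransGen (Relation.SymmGen N.step)) h

theorem linked_source_target (r : N.reactions) : N.linked (N.source r) (N.target r) :=
  .single (.inl r.2)

theorem eq_of_mem_linkageClasses {L : Set (S → ℝ)} (hL : L ∈ N.linkageClasses) {z : S → ℝ}
    (hz : z ∈ L) : L = {y | y ∈ N.complexes ∧ N.linked z y} := by
  obtain ⟨y, -, rfl⟩ := hL
  ext x
  exact ⟨fun hx => ⟨hx.1, (N.linked_symm hz.2).trans hx.2⟩, fun hx => ⟨hx.1, hz.2.trans hx.2⟩⟩

theorem linkageClasses_finite : N.linkageClasses.Finite :=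
  N.complexes.finite_toSet.finite_subsets.subset <| by
    rintro _ ⟨y, -, rfl⟩ z hz
    exact hz.1

theorem exists_mem_linkageClass (L : N.linkageClasses) :
    ∃ y : N.complexes, (y : S → ℝ) ∈ (L : Set (S → ℝ)) := by
  obtain ⟨y, hy, hL⟩ := L.2
  exact ⟨⟨y, hy⟩, hL ▸ ⟨hy, .refl⟩⟩

theorem target_mem_linkageClass_iff (L : N.linkageClasses) (r : N.reactions) :
    (N.target r : S → ℝ) ∈ (L : Set (S → ℝ)) ↔ (N.source r : S → ℝ) ∈ (L : Set (S → ℝ)) := by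
  obtain ⟨y, -, hL⟩ := L.2
  rw [hL]
  exact ⟨fun h => ⟨(N.source r).2, h.2.trans (N.linked_symm (N.linked_source_target r))⟩,
    fun h => ⟨(N.target r).2, h.2.trans (N.linked_source_target r)⟩⟩

noncomputable def linkageSum : (N.complexes → ℝ) →ₗ[ℝ] (N.linkageClasses → ℝ) :=
  LinearMap.pi fun L =>
    ∑ y ∈ Finset.univ.filter fun y : N.complexes => (y : S → ℝ) ∈ (L : Set (S → ℝ)), proj y

theorem linkageSum_single (y : N.complexes) (L : N.linkageClasses) :
    N.linkageSum (Pi.single y 1) L = if (y : S → ℝ) ∈ (L : Set (S → ℝ)) then 1 else 0 := by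
  simp [linkageSum]

theorem linkageSum_comp_incidence : N.linkageSum ∘ₗ N.incidence = 0 := by
  ext r L
  simp [incidence_single, linkageSum_single, N.target_mem_linkageClass_iff]

theorem linkageSum_surjective : Function.Surjective N.linkageSum := by
  have := N.linkageClasses_finite.to_subtype
  have := Fintype.ofFinite N.linkageClasses
  choose rep hrep using N.exists_mem_linkageClass
  have hrep_mem (L L' : N.linkageClasses) : (rep L : S → ℝ) ∈ (L' : Set (S → ℝ)) ↔ L = L' :=
    ⟨fun h => Subtype.ext <| (N.eq_of_mem_linkageClasses L.2 (hrep L)).trans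
      (N.eq_of_mem_linkageClasses L'.2 h).symm, fun h => h ▸ hrep L⟩
  intro g
  refine ⟨∑ L, g L • Pi.single (rep L) 1, funext fun L' => ?_⟩
  simp [linkageSum_single, hrep_mem]

theorem finrank_range_incidence_add_numLinkageClasses_le :
    finrank ℝ (range N.incidence) + N.numLinkageClasses ≤ N.complexes.card := by
  have := N.linkageClasses_finite.to_subtype
  have := Fintype.ofFinite N.linkageClasses
  have h := finrank_range_add_finrank_ker N.linkageSum
  rw [range_eq_top.2 N.linkageSum_surjective, finrank_top, finrank_fintype_fun_eq_card,
    finrank_fintype_fun_eq_card, Fintype.card_coe, ← Nat.card_eq_fintype_card] at h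
  have := Submodule.finrank_mono (range_le_ker_iff.2 N.linkageSum_comp_incidence)
  rw [numLinkageClasses]
  omega

section Reachability

/-- `reach` restricted to the complexes, which are closed under it. -/
def Reaches : N.complexes → N.complexes → Prop :=
  Relation.ReflTransGen fun a b => N.step a b

variable {N}

theorem Reaches.source_target (r : N.reactions) : N.Reaches (N.source r) (N.target r) :=
  .single r.2

theorem Reaches.reach {a b : N.complexes} (h : N.Reaches a b) : N.reach a b :=
  Relation.ReflTransGen.lift Subtype.val (fun _ _ h => h) _ _ h

theorem exists_reaches_of_reach {a : N.complexes} {z : S → ℝ} (h : N.reach a z) :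
    ∃ hz : z ∈ N.complexes, N.Reaches a ⟨z, hz⟩ := by
  induction h with
  | refl => exact ⟨a.2, .refl⟩
  | tail _ hstep ih => exact ⟨N.mem_target _ hstep, ih.2.tail hstep⟩

theorem reaches_iff_reach {a b : N.complexes} : N.Reaches a b ↔ N.reach a b :=
  ⟨Reaches.reach, fun h => (exists_reaches_of_reach h).2⟩

theorem isTerminal_iff {a : N.complexes} :
    N.IsTerminal a ↔ ∀ b, N.Reaches a b → N.Reaches b a := by
  refine ⟨fun h b hab => reaches_iff_reach.2 (h.2 b hab.reach), fun h => ⟨a.2, fun y hy => ?_⟩⟩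
  obtain ⟨_, hay⟩ := exists_reaches_of_reach hy
  exact (h _ hay).reach

/-- A complex reachable from `a` whose own reachable set is smallest is terminal. -/
theorem exists_reaches_isTerminal (a : N.complexes) : ∃ b, N.Reaches a b ∧ N.IsTerminal b := by
  let reachable (b : N.complexes) := Finset.univ.filter (N.Reaches b)
  obtain ⟨b, hab, hmin⟩ := (Finset.univ.filter (N.Reaches a)).exists_min_image
    (fun b => (reachable b).card) ⟨a, Finset.mem_filter.2 ⟨Finset.mem_univ _, .refl⟩⟩
  simp only [Finset.mem_filter, Finset.mem_univ, true_and] at hab hmin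
  refine ⟨b, hab, isTerminal_iff.2 fun c hbc => ?_⟩
  have hsub : reachable c ⊆ reachable b := fun d hd => by
    simp only [reachable, Finset.mem_filter, Finset.mem_univ, true_and] at hd ⊢
    exact hbc.trans hd
  have hb : b ∈ reachable c := Finset.eq_of_subset_of_card_le hsub (hmin c (hab.trans hbc)) ▸
    Finset.mem_filter.2 ⟨Finset.mem_univ _, .refl⟩
  exact (Finset.mem_filter.1 hb).2

end Reachability

section Harmonic

/-- The kernel of the transposed Laplacian, see `mem_ker_transpose_laplacian_iff`. -/
def IsHarmonic (k : N.reactions → ℝ) (f : N.complexes → ℝ) : Prop :=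
  ∀ z, ∑ r with N.source r = z, k r * (f (N.target r) - f z) = 0

open Matrix in
theorem transpose_laplacian_mulVec (k : N.reactions → ℝ) (f : N.complexes → ℝ)
    (z : N.complexes) :
    ((toMatrix' (N.laplacian k))ᵀ *ᵥ f) z =
      ∑ r with N.source r = z, k r * (f (N.target r) - f z) := by
  have : ((toMatrix' (N.laplacian k))ᵀ *ᵥ f) z = f ⬝ᵥ N.laplacian k (Pi.single z 1) := by
    simp [mulVec_transpose, vecMul, dotProduct, toMatrix'_apply]
  rw [this, laplacian_apply, incidence_apply, dotProduct_sum, Finset.sum_filter]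
  refine Finset.sum_congr rfl fun r _ => ?_
  simp only [dotProduct_smul, dotProduct_sub, dotProduct_single, Pi.single_apply, mul_one]
  split_ifs with h <;> simp [h]

variable {N} {k : N.reactions → ℝ} {f : N.complexes → ℝ}

open Matrix in
theorem mem_ker_transpose_laplacian_iff :
    f ∈ ker (toMatrix' (N.laplacian k))ᵀ.mulVecLin ↔ N.IsHarmonic k f := by
  simp only [mem_ker, mulVecLin_apply, funext_iff, transpose_laplacian_mulVec, Pi.zero_apply,
    IsHarmonic]

theorem IsHarmonic.neg (hf : N.IsHarmonic k f) : N.IsHarmonic k (-f) := fun z => by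
  rw [← neg_zero, ← hf z, ← Finset.sum_neg_distrib]
  refine Finset.sum_congr rfl fun r _ => ?_
  simp only [Pi.neg_apply]
  ring

/-- Maximum principle. -/
theorem IsHarmonic.eq_of_reaches (hk : ∀ r, 0 < k r) (hf : N.IsHarmonic k f) {a : N.complexes}
    (hmax : ∀ z, N.Reaches a z → f z ≤ f a) {b : N.complexes} (hab : N.Reaches a b) :
    f b = f a := by
  induction hab with
  | refl => rfl
  | @tail c d hac hcd ih =>
    have hterm : ∀ r ∈ Finset.univ.filter (N.source · = c),
        k r * (f (N.target r) - f c) ≤ 0 := fun r hr => by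
      refine mul_nonpos_of_nonneg_of_nonpos (hk r).le (sub_nonpos.2 (ih ▸ hmax _ ?_))
      exact hac.trans ((Finset.mem_filter.1 hr).2 ▸ Reaches.source_target r)
    have hcd_term := (Finset.sum_eq_zero_iff_of_nonpos hterm).1 (hf c) ⟨(c, d), hcd⟩
      (Finset.mem_filter.2 ⟨Finset.mem_univ _, rfl⟩)
    rw [← ih]
    exact sub_eq_zero.1 ((mul_eq_zero.1 hcd_term).resolve_left (hk _).ne')

theorem IsHarmonic.nonpos_of_isTerminal (hk : ∀ r, 0 < k r) (hf : N.IsHarmonic k f)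
    (h : ∀ b : N.complexes, N.IsTerminal b → f b ≤ 0) (a : N.complexes) : f a ≤ 0 := by
  have : Nonempty N.complexes := ⟨a⟩
  obtain ⟨y, hy⟩ := Finite.exists_max f
  obtain ⟨b, hyb, hb⟩ := exists_reaches_isTerminal y
  calc f a ≤ f y := hy a
    _ = f b := (hf.eq_of_reaches hk (fun z _ => hy z) hyb).symm
    _ ≤ 0 := h b hb

theorem IsHarmonic.eq_zero_of_isTerminal (hk : ∀ r, 0 < k r) (hf : N.IsHarmonic k f)
    (h : ∀ b : N.complexes, N.IsTerminal b → f b = 0) : f = 0 :=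
  funext fun a => le_antisymm (hf.nonpos_of_isTerminal hk (fun b hb => (h b hb).le) a)
    (neg_nonpos.1 (hf.neg.nonpos_of_isTerminal hk (fun b hb => by simp [h b hb]) a))

theorem IsHarmonic.eq_of_isTerminal_of_reaches (hk : ∀ r, 0 < k r) (hf : N.IsHarmonic k f)
    {a b : N.complexes} (ha : N.IsTerminal a) (hab : N.Reaches a b) : f b = f a := by
  obtain ⟨z, haz, hmax⟩ := (Finset.univ.filter (N.Reaches a)).exists_max_image f
    ⟨a, Finset.mem_filter.2 ⟨Finset.mem_univ _, .refl⟩⟩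
  simp only [Finset.mem_filter, Finset.mem_univ, true_and] at haz hmax
  have hza := isTerminal_iff.1 ha z haz
  have hzmax : ∀ w, N.Reaches z w → f w ≤ f z := fun w hzw => hmax w (haz.trans hzw)
  rw [hf.eq_of_reaches hk hzmax (hza.trans hab), hf.eq_of_reaches hk hzmax hza]

end Harmonic

theorem tslc_finite : N.tslc.Finite :=
  N.complexes.finite_toSet.finite_subsets.subset <| by
    rintro _ ⟨y, hy, rfl⟩ z hz
    exact (exists_reaches_of_reach (a := ⟨y, hy.1⟩) hz.1).1

theorem exists_isTerminal_mem_tslc (L : N.tslc) :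
    ∃ y : N.complexes, N.IsTerminal y ∧ (y : S → ℝ) ∈ (L : Set (S → ℝ)) := by
  obtain ⟨y, hy, hL⟩ := L.2
  exact ⟨⟨y, hy.1⟩, hy, hL ▸ ⟨.refl, .refl⟩⟩

variable {N} in
open Matrix in
theorem finrank_ker_laplacian_le {k : N.reactions → ℝ} (hk : ∀ r, 0 < k r) :
    finrank ℝ (ker (N.laplacian k)) ≤ N.numTSLC := by
  have := N.tslc_finite.to_subtype
  have := Fintype.ofFinite N.tslc
  choose rep hrep using N.exists_isTerminal_mem_tslc
  let eval : ker (toMatrix' (N.laplacian k))ᵀ.mulVecLin →ₗ[ℝ] (N.tslc → ℝ) :=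
    LinearMap.pi fun L => proj (rep L) ∘ₗ Submodule.subtype _
  have hinj : Function.Injective eval := by
    rw [← ker_eq_bot, ker_eq_bot']
    rintro ⟨f, hker⟩ h0
    have hf : N.IsHarmonic k f := mem_ker_transpose_laplacian_iff.1 hker
    refine Subtype.ext (hf.eq_zero_of_isTerminal hk fun b hb => ?_)
    let L : N.tslc := ⟨_, b, hb, rfl⟩
    change f b = 0
    rw [hf.eq_of_isTerminal_of_reaches hk (hrep L).1 (reaches_iff_reach.2 (hrep L).2.2)]
    exact congrFun h0 L
  calc finrank ℝ (ker (N.laplacian k))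
      = finrank ℝ (ker (toMatrix' (N.laplacian k))ᵀ.mulVecLin) := by
        rw [Matrix.finrank_ker_mulVecLin_transpose, ← Matrix.toLin'_apply',
          Matrix.toLin'_toMatrix']
    _ ≤ finrank ℝ (N.tslc → ℝ) := finrank_le_finrank_of_injective hinj
    _ = N.numTSLC := by rw [finrank_fintype_fun_eq_card, numTSLC, Nat.card_eq_fintype_card]

end CRN

/-- For a CRN with deficiency `δ` and `t` terminal strong linkage classes,
`dim Ker (Y ∘ A_k) ≤ δ + t` for every positive rate vector `k`. -/
theorem dim_ker_YAk_le {S : Type*} [Fintype S] (N : CRN S)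
    (k : ↥N.reactions → ℝ) (hk : ∀ r, 0 < k r) :
    (Module.finrank ℝ ↥(LinearMap.ker (N.mapY ∘ₗ N.laplacian k)) : ℤ) ≤
      N.deficiency + N.numTSLC := by
  have hcomp := N.mapY.finrank_ker_comp (N.laplacian k)
  have hker := N.finrank_ker_laplacian_le hk
  have hrange : finrank ℝ ↥(ker N.mapY ⊓ range (N.laplacian k)) ≤
      finrank ℝ ↥(ker N.mapY ⊓ range N.incidence) :=
    Submodule.finrank_mono (inf_le_inf_left _ (N.range_laplacian_le k))
  have hstoich := N.mapY.finrank_ker_inf_add_finrank_map (range N.incidence)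
  rw [N.map_mapY_range_incidence] at hstoich
  have hlink := N.finrank_range_incidence_add_numLinkageClasses_le
  rw [CRN.deficiency, CRN.rank]
  omega
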